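/- arXiv:math/0209372 — 9 statements merged into one kernel-verified Lean document; each statement's English description precedes it below -/
import Mathlib

section
/- Ferio NXN: from N(BeA) and CiB one may conclude N(CoA); i.e., if ∀ x y, Bx → Ay → N(x ≠ y) and ∃ x, Cx ∧ Bx, then (∃ x, Cx ∧ ∀ y, Ay → N(x ≠ y)) ∨ (∃ x, N(Cx) ∧ ¬Ax ∧ ∀ y, N(Ay) → N(x ≠ y)). -/
theorem stmt9 {T : Type*} (t0 : T) {W : T → Type*} (A B C : ∀ t, Set (W t))
    (h1 : ∀ x y : ∀ t, W t, x t0 ∈ B t0 → y t0 ∈ A t0 → ∀ t, x t ≠ y t)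
    (h2 : ∃ x : ∀ t, W t, x t0 ∈ C t0 ∧ x t0 ∈ B t0) :
    (∃ x : ∀ t, W t, x t0 ∈ C t0 ∧ ∀ y : ∀ t, W t, y t0 ∈ A t0 → ∀ t, x t ≠ y t) ∨
    (∃ x : ∀ t, W t, (∀ t, x t ∈ C t) ∧ x t0 ∉ A t0 ∧ ∀ y : ∀ t, W t, (∀ t, y t ∈ A t) → ∀ t, x t ≠ y t) := by
  obtain ⟨x, hC, hB⟩ := h2
  exact Or.inl ⟨x, hC, fun y hy => h1 x y hB hy⟩
end

section
/- Darapti NXN: if N(CaA) (∀ x, Cx → N(Ax)), CaB (∀ x, Cx → Bx), and C is nonempty at the actual index (∃ x, Cx), then N(BiA): (∃ x, Bx ∧ N(Ax)) ∨ (∃ x, N(Bx) ∧ Ax). -/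
theorem stmt11 {T : Type*} (t0 : T) {W : T → Type*} (A B C : ∀ t, Set (W t))
    (h1 : ∀ x : ∀ t, W t, x t0 ∈ C t0 → ∀ t, x t ∈ A t)
    (h2 : ∀ x : ∀ t, W t, x t0 ∈ C t0 → x t0 ∈ B t0)
    (hne : ∃ x : ∀ t, W t, x t0 ∈ C t0) :
    (∃ x : ∀ t, W t, x t0 ∈ B t0 ∧ ∀ t, x t ∈ A t) ∨ (∃ x : ∀ t, W t, (∀ t, x t ∈ B t) ∧ x t0 ∈ A t0) := by
  obtain ⟨x, hx⟩ := hne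
  exact Or.inl ⟨x, h2 x hx, h1 x hx⟩
end

section
/- Felapton NXN: if N(CeA) (∀ x y, Cx → Ay → N(x ≠ y)), CaB (∀ x, Cx → Bx), and ∃ x, Cx, then N(BoA): (∃ x, Bx ∧ ∀ y, Ay → N(x ≠ y)) ∨ (∃ x, N(Bx) ∧ ¬Ax ∧ ∀ y, N(Ay) → N(x ≠ y)). -/
theorem stmt12 {T : Type*} (t0 : T) {W : T → Type*} (A B C : ∀ t, Set (W t))
    (h1 : ∀ x y : ∀ t, W t, x t0 ∈ C t0 → y t0 ∈ A t0 → ∀ t, x t ≠ y t)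
    (h2 : ∀ x : ∀ t, W t, x t0 ∈ C t0 → x t0 ∈ B t0)
    (hne : ∃ x : ∀ t, W t, x t0 ∈ C t0) :
    (∃ x : ∀ t, W t, x t0 ∈ B t0 ∧ ∀ y : ∀ t, W t, y t0 ∈ A t0 → ∀ t, x t ≠ y t) ∨
    (∃ x : ∀ t, W t, (∀ t, x t ∈ B t) ∧ x t0 ∉ A t0 ∧ ∀ y : ∀ t, W t, (∀ t, y t ∈ A t) → ∀ t, x t ≠ y t) := by
  obtain ⟨x, hx⟩ := hne
  exact Or.inl ⟨x, h2 x hx, fun y hy => h1 x y hx hy⟩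
end

section
/- Baroco NNN: from N(BaA) (∀ y, By → N(Ay)) and the first disjunct-strengthened premise ∃ x, Cx ∧ ¬Ax ∧ (∀ y, N(Ay) → N(x ≠ y)), one may conclude ∃ x, Cx ∧ ∀ y, By → N(x ≠ y), and hence N(CoB). -/
theorem stmt13 {T : Type*} (t0 : T) {W : T → Type*} (A B C : ∀ t, Set (W t))
    (h1 : ∀ y : ∀ t, W t, y t0 ∈ B t0 → ∀ t, y t ∈ A t)
    (h2 : ∃ x : ∀ t, W t, x t0 ∈ C t0 ∧ x t0 ∉ A t0 ∧ ∀ y : ∀ t, W t, (∀ t, y t ∈ A t) → ∀ t, x t ≠ y t) :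
    (∃ x : ∀ t, W t, x t0 ∈ C t0 ∧ ∀ y : ∀ t, W t, y t0 ∈ B t0 → ∀ t, x t ≠ y t) ∧
    ((∃ x : ∀ t, W t, x t0 ∈ C t0 ∧ ∀ y : ∀ t, W t, y t0 ∈ B t0 → ∀ t, x t ≠ y t) ∨
     (∃ x : ∀ t, W t, (∀ t, x t ∈ C t) ∧ x t0 ∉ B t0 ∧ ∀ y : ∀ t, W t, (∀ t, y t ∈ B t) → ∀ t, x t ≠ y t)) := by
  obtain ⟨x, hC, hA, hx⟩ := h2
  have key : ∃ x : ∀ t, W t, x t0 ∈ C t0 ∧ ∀ y : ∀ t, W t, y t0 ∈ B t0 → ∀ t, x t ≠ y t :=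
    ⟨x, hC, fun y hy t => hx y (h1 y hy) t⟩
  exact ⟨key, Or.inl key⟩
end

section
/- Bocardo NNN: from ∃ x, Cx ∧ ¬Ax ∧ (∀ y, N(Ay) → N(x ≠ y)) and N(CaB) (∀ x, Cx → N(Bx)), one may conclude ∃ x, N(Bx) ∧ ¬Ax ∧ (∀ y, N(Ay) → N(x ≠ y)), and hence N(BoA). -/
theorem stmt14 {T : Type*} (t0 : T) {W : T → Type*} (A B C : ∀ t, Set (W t))
    (h1 : ∃ x : ∀ t, W t, x t0 ∈ C t0 ∧ x t0 ∉ A t0 ∧ ∀ y : ∀ t, W t, (∀ t, y t ∈ A t) → ∀ t, x t ≠ y t)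
    (h2 : ∀ x : ∀ t, W t, x t0 ∈ C t0 → ∀ t, x t ∈ B t) :
    (∃ x : ∀ t, W t, (∀ t, x t ∈ B t) ∧ x t0 ∉ A t0 ∧ ∀ y : ∀ t, W t, (∀ t, y t ∈ A t) → ∀ t, x t ≠ y t) ∧
    ((∃ x : ∀ t, W t, x t0 ∈ B t0 ∧ ∀ y : ∀ t, W t, y t0 ∈ A t0 → ∀ t, x t ≠ y t) ∨
     (∃ x : ∀ t, W t, (∀ t, x t ∈ B t) ∧ x t0 ∉ A t0 ∧ ∀ y : ∀ t, W t, (∀ t, y t ∈ A t) → ∀ t, x t ≠ y t)) := by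
  obtain ⟨x, hC, hA, hne⟩ := h1
  have key : (∀ t, x t ∈ B t) ∧ x t0 ∉ A t0 ∧ ∀ y : ∀ t, W t, (∀ t, y t ∈ A t) → ∀ t, x t ≠ y t :=
    ⟨h2 x hC, hA, hne⟩
  exact ⟨⟨x, key⟩, Or.inr ⟨x, key⟩⟩
end

section
/- Countermodel to Barbara XNN: there exists a modal model with concepts A, B, C such that BaA (∀ x, Bx → Ax) and N(CaB) (∀ x, Cx → N(Bx)) both hold, but N(CaA) (∀ x, Cx → N(Ax)) fails. (One can take T = {0,1}, each world a singleton, a single individual x, with A₀ = B₀ = C₀ = {x₀}, B₁ = {x₁}, A₁ = C₁ = ∅.) -/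
theorem stmt15 : ∃ (T : Type) (t0 : T) (W : T → Type) (A B C : ∀ t, Set (W t)),
    (∀ x : ∀ t, W t, x t0 ∈ B t0 → x t0 ∈ A t0) ∧
    (∀ x : ∀ t, W t, x t0 ∈ C t0 → ∀ t, x t ∈ B t) ∧
    ¬ (∀ x : ∀ t, W t, x t0 ∈ C t0 → ∀ t, x t ∈ A t) := by
  refine ⟨Bool, false, fun _ => Unit,
    fun t => if t then ∅ else Set.univ, fun _ => Set.univ, fun _ => Set.univ,
    fun x _ => by simp, fun x _ t => trivial, fun h => ?_⟩
  have := h (fun _ => ()) (by simp) true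
  simp at this
end

section
/- Countermodel to Celarent XNN: there exists a modal model with concepts A, B, C such that BeA (∀ x, Bx → ¬Ax) and N(CaB) (∀ x, Cx → N(Bx)) hold, but N(CeA) fails, i.e., it is not the case that ∀ x y, Cx → Ay → N(x ≠ y). (Take T = {0,1}, W₀ = {x₀, y₀}, W₁ = {x₁}, with A₀ = {y₀}, B₀ = C₀ = {x₀}, A₁ = B₁ = C₁ = {x₁}.) -/
theorem stmt16 : ∃ (T : Type) (t0 : T) (W : T → Type) (A B C : ∀ t, Set (W t)),
    (∀ x : ∀ t, W t, x t0 ∈ B t0 → x t0 ∉ A t0) ∧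
    (∀ x : ∀ t, W t, x t0 ∈ C t0 → ∀ t, x t ∈ B t) ∧
    ¬ (∀ x y : ∀ t, W t, x t0 ∈ C t0 → y t0 ∈ A t0 → ∀ t, x t ≠ y t) := by
  refine ⟨Bool, false, fun _ => Bool,
    fun t => if t then Set.univ else {true},
    fun t => if t then Set.univ else {false},
    fun t => if t then Set.univ else {false}, ?_, ?_, ?_⟩
  · intro x hx
    simp_all
  · intro x hx t
    cases t <;> simp_all
  · intro h
    exact h (fun _ => false) (fun t => if t then false else true) (by simp) (by simp) true
      (by simp)
end

section
/- Countermodel to Baroco XNN: there exists a modal model with concepts A, B, C such that BaA (∀ x, Bx → Ax) and the premise ∃ y, N(Cy) ∧ ¬Ay ∧ (∀ x, N(Ax) → N(x ≠ y)) hold, but N(CoB) fails, where N(CoB) := (∃ y, Cy ∧ ∀ x, Bx → N(x ≠ y)) ∨ (∃ y, N(Cy) ∧ ¬By ∧ ∀ x, N(Bx) → N(x ≠ y)). (Take T = {0,1}, W₀ = {x₀, y₀}, W₁ = {x₁}, A₀ = B₀ = {x₀}, C₀ = {y₀}, A₁ = ∅, B₁ = C₁ = {x₁}.) -/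
theorem stmt17 : ∃ (T : Type) (t0 : T) (W : T → Type) (A B C : ∀ t, Set (W t)),
    (∀ x : ∀ t, W t, x t0 ∈ B t0 → x t0 ∈ A t0) ∧
    (∃ y : ∀ t, W t, (∀ t, y t ∈ C t) ∧ y t0 ∉ A t0 ∧ ∀ x : ∀ t, W t, (∀ t, x t ∈ A t) → ∀ t, x t ≠ y t) ∧
    ¬ ((∃ y : ∀ t, W t, y t0 ∈ C t0 ∧ ∀ x : ∀ t, W t, x t0 ∈ B t0 → ∀ t, x t ≠ y t) ∨
       (∃ y : ∀ t, W t, (∀ t, y t ∈ C t) ∧ y t0 ∉ B t0 ∧ ∀ x : ∀ t, W t, (∀ t, x t ∈ B t) → ∀ t, x t ≠ y t)) := by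
  refine ⟨Bool, false, fun t => match t with | false => Bool | true => Unit,
    fun t => match t with | false => {false} | true => ∅,
    fun t => match t with | false => {false} | true => Set.univ,
    fun t => match t with | false => {true} | true => Set.univ, ?_, ?_, ?_⟩
  · intro x hx; exact hx
  · refine ⟨fun t => match t with | false => true | true => (), ?_, ?_, ?_⟩
    · intro t; cases t <;> simp
    · simp
    · intro x hx
      exact absurd (hx true) (by simp)
  · rintro (⟨y, hy, h⟩ | ⟨y, hy, hy2, h⟩)
    · exact h (fun t => match t with | false => false | true => ()) rfl true rfl
    · exact h (fun t => match t with | false => false | true => ())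
        (by intro t; cases t <;> simp) true rfl
end

section
/- Celarent NKX: if N(BeA) (∀ x y, Bx → Ay → N(x ≠ y)) and the contingent premise ∀ x, Cx → ∃ y, By ∧ M(x = y), then CeA holds: ∀ x, Cx → ¬Ax. -/
theorem stmt18 {T : Type*} (t0 : T) {W : T → Type*} (A B C : ∀ t, Set (W t))
    (h1 : ∀ x y : ∀ t, W t, x t0 ∈ B t0 → y t0 ∈ A t0 → ∀ t, x t ≠ y t)
    (h2 : ∀ x : ∀ t, W t, x t0 ∈ C t0 → ∃ y : ∀ t, W t, y t0 ∈ B t0 ∧ ∃ t, x t = y t) :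
    ∀ x : ∀ t, W t, x t0 ∈ C t0 → x t0 ∉ A t0 := by
  intro x hx hA
  obtain ⟨y, hB, t, ht⟩ := h2 x hx
  exact h1 y x hB hA t ht.symm
end
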